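/- Facility location decomposition: let f(X) = Σ_{i∈I} max_{j∈X} w_{ij} for X ≠ ∅ and f(∅) = 0, with w_{ij} ≥ 0. Define w_{i,min} = min_{j∈E} w_{ij}, f̃(X) = Σ_i max_{j∈X}(w_{ij} - w_{i,min}) (with f̃(∅)=0), ℓ(X) = Σ_{j∈X} f̃(j | E∖{j}), g = f̃ - ℓ, and h(X) = ℓ(X) + (Σ_i w_{i,min})·[X ≠ ∅]. Then f = g + h, g is monotone submodular and nonnegative, and h is M♮-concave and nonnegative. -/

import Mathlib

/-!
Subtracting `m i = min_j w i j` from row `i` lowers every nonempty maximum by `m i`, so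
`f = f̃ + (∑ i, m i) [X ≠ ∅]`, and `f̃`, a sum of maxima of nonnegative weights, is monotone,
submodular and vanishes at `∅`. By diminishing returns every marginal `f̃(j | X)` with `j ∉ X`
dominates the last marginal `f̃(j | E ∖ {j})`, so subtracting the modular function `ℓ` built from
the last marginals keeps `g = f̃ - ℓ` monotone; modular terms never affect submodularity. The modular part of `h` cancels in every
exchange inequality, and the indicator `[X ≠ ∅]` satisfies it by a case split on whether `X = {i}`.
-/

open Finset

def Submodular {E : Type*} [DecidableEq E] (f : Finset E → ℝ) : Prop :=
  ∀ X Y : Finset E, f (X ∩ Y) + f (X ∪ Y) ≤ f X + f Y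

def MonotoneSF {E : Type*} (f : Finset E → ℝ) : Prop :=
  ∀ X Y : Finset E, X ⊆ Y → f X ≤ f Y

def MConcave {E : Type*} [DecidableEq E] (f : Finset E → ℝ) : Prop :=
  ∀ X Y : Finset E, ∀ i ∈ X \ Y,
    f X + f Y ≤ f (X.erase i) + f (insert i Y) ∨
    ∃ j ∈ Y \ X, f X + f Y ≤ f (insert j (X.erase i)) + f ((insert i Y).erase j)

/-- The facility location function `X ↦ Σ_i max_{j∈X} w i j`, with value 0 at `∅`. -/
noncomputable def facLoc {I E : Type*} [Fintype I] (w : I → E → ℝ) (X : Finset E) : ℝ :=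
  ∑ i : I, if hX : X.Nonempty then X.sup' hX (w i) else 0

section SetFunction

variable {E : Type*} [DecidableEq E]

lemma monotoneSF_of_le_insert {f : Finset E → ℝ}
    (hf : ∀ X j, j ∉ X → f X ≤ f (insert j X)) : MonotoneSF f := by
  have hmono : Monotone f := (monotone_iff_forall_covBy f).2 fun X _ hcov => by
    obtain ⟨j, hj, rfl⟩ := covBy_iff_exists_insert.1 hcov
    exact hf X j hj
  exact fun _ _ hXY => hmono hXY

lemma Submodular.marginal_le_of_subset {F : Finset E → ℝ} (hF : Submodular F) {X Y : Finset E}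
    (hXY : X ⊆ Y) {j : E} (hj : j ∉ Y) :
    F (insert j Y) - F Y ≤ F (insert j X) - F X := by
  have := hF (insert j X) Y
  rw [insert_inter_of_notMem hj, inter_eq_left.2 hXY, insert_union, union_eq_right.2 hXY] at this
  linarith

lemma Submodular.sub_sum {F : Finset E → ℝ} (hF : Submodular F) (c : E → ℝ) :
    Submodular fun X => F X - ∑ j ∈ X, c j := by
  intro X Y
  linarith [hF X Y, sum_union_inter (s₁ := X) (s₂ := Y) (f := c)]

lemma MConcave.sum_add {f : Finset E → ℝ} (hf : MConcave f) (c : E → ℝ) :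
    MConcave fun X => ∑ j ∈ X, c j + f X := by
  intro X Y i hi
  obtain ⟨hiX, hiY⟩ := mem_sdiff.1 hi
  have hmove : ∑ j ∈ X, c j + ∑ j ∈ Y, c j = ∑ j ∈ X.erase i, c j + ∑ j ∈ insert i Y, c j := by
    rw [sum_insert hiY, ← add_sum_erase X c hiX]; ring
  refine (hf X Y i hi).imp (fun hle => by linarith) ?_
  rintro ⟨j, hj, hle⟩
  obtain ⟨hjY, hjX⟩ := mem_sdiff.1 hj
  have hswap : ∑ k ∈ X.erase i, c k + ∑ k ∈ insert i Y, c k =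
      ∑ k ∈ insert j (X.erase i), c k + ∑ k ∈ (insert i Y).erase j, c k := by
    rw [sum_insert (fun h => hjX (mem_of_mem_erase h)),
      ← add_sum_erase (insert i Y) c (mem_insert_of_mem hjY)]
    ring
  exact ⟨j, hj, by linarith⟩

lemma mConcave_mul_indicator_ne_empty {M : ℝ} (hM : 0 ≤ M) :
    MConcave fun X : Finset E => M * if X = ∅ then 0 else 1 := by
  intro X Y i hi
  obtain ⟨hiX, hiY⟩ := mem_sdiff.1 hi
  have hX : X ≠ ∅ := ne_empty_of_mem hiX
  by_cases hsingleton : X.erase i = ∅ ∧ Y ≠ ∅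
  · obtain ⟨hXi, hY⟩ := hsingleton
    obtain ⟨j, hjY⟩ := nonempty_iff_ne_empty.2 hY
    have hji : j ≠ i := fun h => hiY (h ▸ hjY)
    have hjX : j ∉ X := fun h => notMem_empty j (hXi ▸ mem_erase.2 ⟨hji, h⟩)
    have hne : (insert i Y).erase j ≠ ∅ :=
      ne_empty_of_mem (mem_erase.2 ⟨hji.symm, mem_insert_self i Y⟩)
    exact Or.inr ⟨j, mem_sdiff.2 ⟨hjY, hjX⟩, by simp [hX, hY, hne]⟩
  · left
    rw [not_and_not_right] at hsingleton
    by_cases hXi : X.erase i = ∅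
    · simp [hX, hXi, hsingleton hXi]
    · simp only [hX, hXi, insert_ne_empty, if_false]
      split_ifs <;> linarith

variable [Fintype E]

lemma Submodular.monotoneSF_sub_sum_last_marginal {F : Finset E → ℝ} (hF : Submodular F) :
    MonotoneSF fun X => F X - ∑ j ∈ X, (F univ - F (univ.erase j)) := by
  refine monotoneSF_of_le_insert fun X j hj => ?_
  have := hF.marginal_le_of_subset (subset_erase.2 ⟨subset_univ X, hj⟩) (notMem_erase j univ)
  rw [insert_erase (mem_univ j)] at this
  rw [sum_insert hj]
  linarith

lemma MonotoneSF.last_marginal_nonneg {F : Finset E → ℝ} (hF : MonotoneSF F) (j : E) :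
    0 ≤ F univ - F (univ.erase j) :=
  sub_nonneg.2 (hF _ _ (erase_subset j univ))

end SetFunction

section SupOrZero

variable {E : Type*}

noncomputable def supOrZero (v : E → ℝ) (X : Finset E) : ℝ :=
  if hX : X.Nonempty then X.sup' hX v else 0

@[simp]
lemma supOrZero_empty (v : E → ℝ) : supOrZero v ∅ = 0 := by
  simp [supOrZero]

lemma supOrZero_of_nonempty (v : E → ℝ) {X : Finset E} (hX : X.Nonempty) :
    supOrZero v X = X.sup' hX v :=
  dif_pos hX

variable {v : E → ℝ}

lemma supOrZero_nonneg (hv : ∀ j, 0 ≤ v j) (X : Finset E) : 0 ≤ supOrZero v X := by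
  rcases X.eq_empty_or_nonempty with rfl | ⟨j, hj⟩
  · simp
  · rw [supOrZero_of_nonempty v ⟨j, hj⟩]
    exact (hv j).trans (le_sup' v hj)

lemma monotoneSF_supOrZero (hv : ∀ j, 0 ≤ v j) : MonotoneSF (supOrZero v) := by
  intro X Y hXY
  rcases X.eq_empty_or_nonempty with rfl | hX
  · simpa using supOrZero_nonneg hv Y
  · rw [supOrZero_of_nonempty v hX, supOrZero_of_nonempty v (hX.mono hXY)]
    exact sup'_mono v hXY hX

lemma submodular_supOrZero [DecidableEq E] (hv : ∀ j, 0 ≤ v j) : Submodular (supOrZero v) := by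
  intro X Y
  rcases X.eq_empty_or_nonempty with rfl | hX
  · simp
  rcases Y.eq_empty_or_nonempty with rfl | hY
  · simp
  have hunion : supOrZero v (X ∪ Y) = max (supOrZero v X) (supOrZero v Y) := by
    rw [supOrZero_of_nonempty v hX, supOrZero_of_nonempty v hY,
      supOrZero_of_nonempty v (hX.mono subset_union_left)]
    exact sup'_union hX hY v
  have hX' := monotoneSF_supOrZero hv _ _ (inter_subset_left (s₁ := X) (s₂ := Y))
  have hY' := monotoneSF_supOrZero hv _ _ (inter_subset_right (s₁ := X) (s₂ := Y))
  rw [hunion]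
  rcases le_total (supOrZero v X) (supOrZero v Y) with hle | hle
  · rw [max_eq_right hle]; linarith
  · rw [max_eq_left hle]; linarith

lemma supOrZero_sub_const [DecidableEq E] (v : E → ℝ) (c : ℝ) (X : Finset E) :
    supOrZero (fun j => v j - c) X = supOrZero v X - c * if X = ∅ then 0 else 1 := by
  rcases X.eq_empty_or_nonempty with rfl | hX
  · simp
  · simp only [supOrZero_of_nonempty _ hX, hX.ne_empty, if_false, mul_one, sub_eq_add_neg,
      sup'_add]

end SupOrZero

section FacilityLocation

variable {I E : Type*} [Fintype I] {w : I → E → ℝ}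

lemma facLoc_eq_sum_supOrZero (w : I → E → ℝ) (X : Finset E) :
    facLoc w X = ∑ i, supOrZero (w i) X :=
  rfl

@[simp]
lemma facLoc_empty (w : I → E → ℝ) : facLoc w ∅ = 0 := by
  simp [facLoc_eq_sum_supOrZero]

lemma monotoneSF_facLoc (hw : ∀ i j, 0 ≤ w i j) : MonotoneSF (facLoc w) :=
  fun X Y hXY => sum_le_sum fun i _ => monotoneSF_supOrZero (hw i) X Y hXY

lemma submodular_facLoc [DecidableEq E] (hw : ∀ i j, 0 ≤ w i j) : Submodular (facLoc w) := by
  intro X Y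
  simp only [facLoc_eq_sum_supOrZero, ← sum_add_distrib]
  exact sum_le_sum fun i _ => submodular_supOrZero (hw i) X Y

lemma facLoc_sub_const [DecidableEq E] (w : I → E → ℝ) (m : I → ℝ) (X : Finset E) :
    facLoc (fun i j => w i j - m i) X = facLoc w X - (∑ i, m i) * if X = ∅ then 0 else 1 := by
  simp only [facLoc_eq_sum_supOrZero, supOrZero_sub_const, sum_sub_distrib, sum_mul]

end FacilityLocation

theorem facility_location_decomposition_general {I E : Type*} [Fintype I]
    [Fintype E] [DecidableEq E] [Nonempty E]
    (w : I → E → ℝ) (hw : ∀ i j, 0 ≤ w i j) :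
    -- the reduced facility location function f̃
    ∀ ft : Finset E → ℝ,
      (ft = facLoc (fun i j => w i j - univ.inf' univ_nonempty (w i))) →
    -- the modular part ℓ
    ∀ ℓ : Finset E → ℝ, (ℓ = fun X => ∑ j ∈ X, (ft univ - ft (univ.erase j))) →
    ∀ g : Finset E → ℝ, (g = fun X => ft X - ℓ X) →
    ∀ h : Finset E → ℝ,
      (h = fun X => ℓ X + (∑ i : I, univ.inf' univ_nonempty (w i)) *
        (if X = ∅ then 0 else 1)) →
    (∀ X : Finset E, facLoc w X = g X + h X) ∧
    MonotoneSF g ∧ Submodular g ∧ (∀ X : Finset E, 0 ≤ g X) ∧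
    MConcave h ∧ (∀ X : Finset E, 0 ≤ h X) := by
  rintro ft rfl ℓ rfl g rfl h rfl
  set m : I → ℝ := fun i => univ.inf' univ_nonempty (w i)
  have hM : 0 ≤ ∑ i, m i := sum_nonneg fun i _ => le_inf' _ _ fun j _ => hw i j
  have hwm : ∀ i j, 0 ≤ w i j - m i := fun i j => sub_nonneg.2 (inf'_le _ (mem_univ j))
  have hft_mono := monotoneSF_facLoc hwm
  have hft_sub := submodular_facLoc hwm
  have hg_mono := hft_sub.monotoneSF_sub_sum_last_marginal
  refine ⟨fun X => ?_, hg_mono, hft_sub.sub_sum _, fun X => ?_,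
    (mConcave_mul_indicator_ne_empty hM).sum_add _, fun X => ?_⟩
  · simp only [facLoc_sub_const]
    ring
  · simpa using hg_mono ∅ X (empty_subset X)
  · exact add_nonneg (sum_nonneg fun j _ => hft_mono.last_marginal_nonneg j)
      (mul_nonneg hM (by split_ifs <;> norm_num))

theorem facility_location_decomposition {I E : Type*} [Fintype I] [Nonempty I]
    [Fintype E] [DecidableEq E] [Nonempty E]
    (w : I → E → ℝ) (hw : ∀ i j, 0 ≤ w i j) :
    -- the reduced facility location function f̃
    ∀ ft : Finset E → ℝ,
      (ft = facLoc (fun i j => w i j - univ.inf' univ_nonempty (w i))) →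
    -- the modular part ℓ
    ∀ ℓ : Finset E → ℝ, (ℓ = fun X => ∑ j ∈ X, (ft univ - ft (univ.erase j))) →
    ∀ g : Finset E → ℝ, (g = fun X => ft X - ℓ X) →
    ∀ h : Finset E → ℝ,
      (h = fun X => ℓ X + (∑ i : I, univ.inf' univ_nonempty (w i)) *
        (if X = ∅ then 0 else 1)) →
    (∀ X : Finset E, facLoc w X = g X + h X) ∧
    MonotoneSF g ∧ Submodular g ∧ (∀ X : Finset E, 0 ≤ g X) ∧
    MConcave h ∧ (∀ X : Finset E, 0 ≤ h X) :=
  facility_location_decomposition_general w hw
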